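/- Let S be a nonempty additive commutative semigroup, G a group, and f, f' : S → G polynomial maps. If the subgroup of G generated by f(S) ∪ f'(S) is nilpotent, then the elementwise commutator [f, f'] : S → G, t ↦ f(t)·f'(t)·f(t)⁻¹·f'(t)⁻¹, is a polynomial map. -/

import Mathlib

/-!
Let `H` be the nilpotent subgroup generated by the values of `f` and `f'`, with lower central
series `γ`, `γ n = 1`, and let `d` exceed both degrees. The subgroups `F k = γ ⌊k / d⌋` form a
filtration of `H` (`⁅F i, F j⁆ ≤ F (i + j)`, by the three subgroups lemma), and both maps are
polynomial with respect to it: their differences of order `k` take values in `F k`. By Leibman's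
theorem, such maps are closed under products and inverses, and the commutator of maps polynomial
with respect to `F` shifted by `i` and by `j` is polynomial with respect to `F` shifted by
`i + j`. So the differences of `⁅f, f'⁆` of order `n d` lie in `F (n d) = γ n = 1`.
-/

namespace PaperPoly

/-- `DegLE d f` means that `f : S → G` is a polynomial map of degree at most `d ∈ ℕ`:
the base case `DegLE 0 f` means `f` is constant, and `DegLE (d+1) f` means that for every
`s : S` both difference maps `L_s f : t ↦ f (s+t) * (f t)⁻¹` and
`R_s f : t ↦ (f t)⁻¹ * f (s+t)` satisfy `DegLE d`. -/
def DegLE {S : Type*} [AddCommSemigroup S] {G : Type*} [Group G] : ℕ → (S → G) → Prop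
  | 0 => fun f => ∀ t t' : S, f t = f t'
  | d + 1 => fun f => ∀ s : S,
      DegLE d (fun t => f (s + t) * (f t)⁻¹) ∧ DegLE d (fun t => (f t)⁻¹ * f (s + t))

/-- `f` is a polynomial map (of some finite degree). -/
def IsPoly {S : Type*} [AddCommSemigroup S] {G : Type*} [Group G] (f : S → G) : Prop :=
  ∃ d : ℕ, DegLE d f

end PaperPoly

namespace Subgroup

variable {G : Type*} [Group G]

theorem commutator_commutator_le_of_rotate {H₁ H₂ H₃ N : Subgroup G} [N.Normal]
    (h1 : ⁅⁅H₂, H₃⁆, H₁⁆ ≤ N) (h2 : ⁅⁅H₃, H₁⁆, H₂⁆ ≤ N) : ⁅⁅H₁, H₂⁆, H₃⁆ ≤ N := by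
  simp only [← QuotientGroup.ker_mk' N, ← map_eq_bot_iff, map_commutator] at h1 h2 ⊢
  exact commutator_commutator_eq_bot_of_rotate h1 h2

theorem commutator_lowerCentralSeries_le (m n : ℕ) :
    ⁅(⊤ : Subgroup G).lowerCentralSeries m, (⊤ : Subgroup G).lowerCentralSeries n⁆ ≤
      (⊤ : Subgroup G).lowerCentralSeries (m + n + 1) := by
  induction n generalizing m with
  | zero => rfl
  | succ n ih =>
    rw [lowerCentralSeries_succ, commutator_comm]
    refine commutator_commutator_le_of_rotate ?_ ?_
    · rw [commutator_comm ⊤, ← lowerCentralSeries_succ]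
      convert ih (m + 1) using 2
      omega
    · calc ⁅⁅(⊤ : Subgroup G).lowerCentralSeries m, (⊤ : Subgroup G).lowerCentralSeries n⁆, ⊤⁆
          ≤ (⊤ : Subgroup G).lowerCentralSeries (m + n + 1 + 1) := commutator_mono (ih m) le_rfl
        _ = (⊤ : Subgroup G).lowerCentralSeries (m + (n + 1) + 1) := by rw [Nat.add_assoc m n 1]

end Subgroup

namespace PaperPoly

section Filtration

variable {G : Type*} [Group G]

structure IsFiltration (F : ℕ → Subgroup G) : Prop where
  antitone : Antitone F
  commutator_le (i j : ℕ) : ⁅F i, F j⁆ ≤ F (i + j)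

theorem isFiltration_lowerCentralSeries_div (d : ℕ) :
    IsFiltration fun k => (⊤ : Subgroup G).lowerCentralSeries (k / d) where
  antitone _ _ h := Subgroup.lowerCentralSeries_antitone _ (Nat.div_le_div_right h)
  commutator_le i j := (Subgroup.commutator_lowerCentralSeries_le _ _).trans
    (Subgroup.lowerCentralSeries_antitone _ (Nat.add_div_le_div_add_div_add_one i j d))

end Filtration

section Differences

open scoped commutatorElement

variable {S : Type*} [AddCommSemigroup S] {G : Type*} [Group G]

def leftDiff (a : S) (f : S → G) : S → G := fun t => f (a + t) * (f t)⁻¹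

def rightDiff (a : S) (f : S → G) : S → G := fun t => (f t)⁻¹ * f (a + t)

theorem degLE_succ_iff {d : ℕ} {f : S → G} :
    DegLE (d + 1) f ↔ ∀ a, DegLE d (leftDiff a f) ∧ DegLE d (rightDiff a f) := Iff.rfl

theorem leftDiff_one (a : S) : leftDiff a (1 : S → G) = 1 := by
  funext t; simp [leftDiff]

theorem rightDiff_one (a : S) : rightDiff a (1 : S → G) = 1 := by
  funext t; simp [rightDiff]

theorem leftDiff_of_degLE_zero {f : S → G} (hf : DegLE 0 f) (a : S) : leftDiff a f = 1 := by
  funext t; simp [leftDiff, hf (a + t) t]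

theorem rightDiff_of_degLE_zero {f : S → G} (hf : DegLE 0 f) (a : S) : rightDiff a f = 1 := by
  funext t; simp [rightDiff, hf (a + t) t]

theorem rightDiff_eq_conj_leftDiff (a : S) (f : S → G) :
    rightDiff a f = f⁻¹ * leftDiff a f * f⁻¹⁻¹ := by
  funext t; simp [leftDiff, rightDiff, mul_assoc]

theorem leftDiff_mul (a : S) (f g : S → G) :
    leftDiff a (f * g) = leftDiff a f * (f * leftDiff a g * f⁻¹) := by
  funext t; simp [leftDiff, mul_assoc]

theorem leftDiff_inv (a : S) (f : S → G) : leftDiff a f⁻¹ = (rightDiff a f)⁻¹ := by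
  funext t; simp [leftDiff, rightDiff]

/-- With `u`, `v` the left differences of `f`, `g`, so that `f (a + t) = u f` and
`g (a + t) = v g`: every factor is a commutator involving `u` or `v`, hence gains weight. -/
theorem leftDiff_commutator (a : S) (f g : S → G) :
    leftDiff a ⁅f, g⁆ =
      leftDiff a f * ⁅f, leftDiff a g⁆ * (leftDiff a f)⁻¹ * ⁅leftDiff a f, leftDiff a g⁆ *
        ⁅leftDiff a g * leftDiff a f, ⁅f, g⁆⁆ *
        (⁅f, g⁆ * (leftDiff a g * ⁅leftDiff a f, g⁆ * (leftDiff a g)⁻¹) * ⁅f, g⁆⁻¹) := by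
  funext t; simp only [leftDiff, commutatorElement_def, Pi.mul_apply, Pi.inv_apply]; group

theorem DegLE.succ {d : ℕ} {f : S → G} (hf : DegLE d f) : DegLE (d + 1) f := by
  induction d generalizing f with
  | zero =>
    refine degLE_succ_iff.2 fun a => ?_
    rw [leftDiff_of_degLE_zero hf, rightDiff_of_degLE_zero hf]
    exact ⟨fun _ _ => rfl, fun _ _ => rfl⟩
  | succ d ih => exact fun a => ⟨ih (hf a).1, ih (hf a).2⟩

theorem DegLE.mono {d d' : ℕ} {f : S → G} (hf : DegLE d f) (h : d ≤ d') : DegLE d' f := by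
  induction h with
  | refl => exact hf
  | step _ ih => exact ih.succ

theorem degLE_comp_iff {G' : Type*} [Group G'] {φ : G →* G'} (hφ : Function.Injective φ)
    {d : ℕ} {f : S → G} : DegLE d (φ ∘ f) ↔ DegLE d f := by
  induction d generalizing f with
  | zero => exact forall₂_congr fun t t' => hφ.eq_iff
  | succ d ih =>
    have hL (a : S) : leftDiff a (φ ∘ f) = φ ∘ leftDiff a f := by
      funext t; simp [leftDiff]
    have hR (a : S) : rightDiff a (φ ∘ f) = φ ∘ rightDiff a f := by
      funext t; simp [rightDiff]
    simp only [degLE_succ_iff, hL, hR, ih]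

end Differences

section Adapted

open scoped commutatorElement

variable {S : Type*} [AddCommSemigroup S] {G : Type*} [Group G]

/-- Maps all of whose iterated left/right differences of order `k ≤ m` take values in
`F (c + k)`: polynomial maps adapted to the filtration `F` shifted by `c`, truncated at order
`m`. -/
def adapted (F : ℕ → Subgroup G) : ℕ → ℕ → Set (S → G)
  | 0, c => {f | ∀ t, f t ∈ F c}
  | m + 1, c => {f | (∀ t, f t ∈ F c) ∧
      ∀ a, leftDiff a f ∈ adapted F m (c + 1) ∧ rightDiff a f ∈ adapted F m (c + 1)}

variable {F : ℕ → Subgroup G} {m c : ℕ} {f g : S → G}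

theorem apply_mem_of_mem_adapted (hf : f ∈ adapted F m c) (t : S) : f t ∈ F c := by
  cases m with
  | zero => exact hf t
  | succ m => exact hf.1 t

theorem adapted_succ_subset : (adapted F (m + 1) c : Set (S → G)) ⊆ adapted F m c := by
  induction m generalizing c with
  | zero => exact fun f hf => hf.1
  | succ m ih => exact fun f hf => ⟨hf.1, fun a => ⟨ih (hf.2 a).1, ih (hf.2 a).2⟩⟩

theorem adapted_anti (hF : Antitone F) {c' : ℕ} (h : c' ≤ c) :
    (adapted F m c : Set (S → G)) ⊆ adapted F m c' := by
  induction m generalizing c c' with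
  | zero => exact fun f hf t => hF h (hf t)
  | succ m ih =>
    exact fun f hf => ⟨fun t => hF h (hf.1 t),
      fun a => ⟨ih (by omega) (hf.2 a).1, ih (by omega) (hf.2 a).2⟩⟩

theorem one_mem_adapted (m c : ℕ) : (1 : S → G) ∈ adapted F m c := by
  induction m generalizing c with
  | zero => exact fun _ => one_mem _
  | succ m ih =>
    refine ⟨fun _ => one_mem _, fun a => ?_⟩
    rw [leftDiff_one, rightDiff_one]
    exact ⟨ih _, ih _⟩

theorem mem_adapted_of_degLE (hF : Antitone F) {e : ℕ} (htop : F (e + c) = ⊤)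
    (hf : DegLE e f) : f ∈ adapted F m c := by
  induction m generalizing e c f with
  | zero => exact fun t => hF (Nat.le_add_left c e) (htop ▸ Subgroup.mem_top _)
  | succ m ih =>
    refine ⟨apply_mem_of_mem_adapted (ih htop hf), fun a => ?_⟩
    cases e with
    | zero =>
      rw [leftDiff_of_degLE_zero hf, rightDiff_of_degLE_zero hf]
      exact ⟨one_mem_adapted _ _, one_mem_adapted _ _⟩
    | succ e =>
      have htop' : F (e + (c + 1)) = ⊤ := by rwa [← Nat.add_assoc, Nat.add_right_comm]
      exact ⟨ih htop' (hf a).1, ih htop' (hf a).2⟩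

theorem degLE_of_mem_adapted (hbot : F (m + c) = ⊥) (hf : f ∈ adapted F m c) : DegLE m f := by
  induction m generalizing c f with
  | zero =>
    rw [Nat.zero_add] at hbot
    have hval (t : S) : f t = 1 := Subgroup.mem_bot.1 (hbot ▸ hf t)
    exact fun t t' => (hval t).trans (hval t').symm
  | succ m ih =>
    have hbot' : F (m + (c + 1)) = ⊥ := by rwa [← Nat.add_assoc, ← Nat.add_right_comm]
    exact fun a => ⟨ih hbot' (hf.2 a).1, ih hbot' (hf.2 a).2⟩

variable (S F m) in
/-- Leibman's theorem at order `m`. The three parts are proved by a simultaneous induction on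
`m`: each of them at order `m + 1` needs the others at order `m`. -/
structure AdaptedClosed : Prop where
  mul_mem {c : ℕ} {f g : S → G} : f ∈ adapted F m c → g ∈ adapted F m c → f * g ∈ adapted F m c
  inv_mem {c : ℕ} {f : S → G} : f ∈ adapted F m c → f⁻¹ ∈ adapted F m c
  commutator_mem {i j : ℕ} {f g : S → G} :
    f ∈ adapted F m i → g ∈ adapted F m j → ⁅f, g⁆ ∈ adapted F m (i + j)

theorem adaptedClosed_zero (hF : IsFiltration F) : AdaptedClosed S F 0 where
  mul_mem hf hg t := mul_mem (hf t) (hg t)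
  inv_mem hf t := inv_mem (hf t)
  commutator_mem hf hg t :=
    hF.commutator_le _ _ (Subgroup.commutator_mem_commutator (hf t) (hg t))

namespace AdaptedClosed

variable (h : AdaptedClosed S F m) (hF : Antitone F)
include h hF

theorem conj_mem {e : ℕ} {p q : S → G} (hp : p ∈ adapted F m e) (hq : q ∈ adapted F m c) :
    p * q * p⁻¹ ∈ adapted F m c := by
  rw [show p * q * p⁻¹ = ⁅p, q⁆ * q by group]
  exact h.mul_mem (adapted_anti hF (Nat.le_add_left c e) (h.commutator_mem hp hq)) hq

theorem mem_succ_of_leftDiff (hf : f ∈ adapted F m c)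
    (hL : ∀ a, leftDiff a f ∈ adapted F m (c + 1)) : f ∈ adapted F (m + 1) c := by
  refine ⟨apply_mem_of_mem_adapted hf, fun a => ⟨hL a, ?_⟩⟩
  rw [rightDiff_eq_conj_leftDiff]
  exact h.conj_mem hF (h.inv_mem hf) (hL a)

theorem mul_mem_succ (hf : f ∈ adapted F (m + 1) c) (hg : g ∈ adapted F (m + 1) c) :
    f * g ∈ adapted F (m + 1) c := by
  refine h.mem_succ_of_leftDiff hF
    (h.mul_mem (adapted_succ_subset hf) (adapted_succ_subset hg)) fun a => ?_
  rw [leftDiff_mul]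
  exact h.mul_mem (hf.2 a).1 (h.conj_mem hF (adapted_succ_subset hf) (hg.2 a).1)

theorem inv_mem_succ (hf : f ∈ adapted F (m + 1) c) : f⁻¹ ∈ adapted F (m + 1) c := by
  refine h.mem_succ_of_leftDiff hF (h.inv_mem (adapted_succ_subset hf)) fun a => ?_
  rw [leftDiff_inv]
  exact h.inv_mem (hf.2 a).2

theorem commutator_mem_succ {i j : ℕ} (hf : f ∈ adapted F (m + 1) i)
    (hg : g ∈ adapted F (m + 1) j) : ⁅f, g⁆ ∈ adapted F (m + 1) (i + j) := by
  have hf' := adapted_succ_subset hf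
  have hg' := adapted_succ_subset hg
  have hw := h.commutator_mem hf' hg'
  refine h.mem_succ_of_leftDiff hF hw fun a => ?_
  have hu := (hf.2 a).1
  have hv := (hg.2 a).1
  have weaken {k : ℕ} (hk : i + j + 1 ≤ k) :
      (adapted F m k : Set (S → G)) ⊆ adapted F m (i + j + 1) :=
    adapted_anti hF hk
  have hvu : leftDiff a g * leftDiff a f ∈ adapted F m 1 :=
    h.mul_mem (adapted_anti hF (by omega) hv) (adapted_anti hF (by omega) hu)
  rw [leftDiff_commutator]
  refine h.mul_mem (h.mul_mem (h.mul_mem ?_ ?_) ?_) ?_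
  · exact h.conj_mem hF hu (weaken (by omega) (h.commutator_mem hf' hv))
  · exact weaken (by omega) (h.commutator_mem hu hv)
  · exact weaken (by omega) (h.commutator_mem hvu hw)
  · exact h.conj_mem hF hw (h.conj_mem hF hv (weaken (by omega) (h.commutator_mem hu hg')))

end AdaptedClosed

theorem adaptedClosed (hF : IsFiltration F) : ∀ m, AdaptedClosed S F m
  | 0 => adaptedClosed_zero hF
  | m + 1 => ⟨(adaptedClosed hF m).mul_mem_succ hF.antitone,
      (adaptedClosed hF m).inv_mem_succ hF.antitone,
      (adaptedClosed hF m).commutator_mem_succ hF.antitone⟩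

end Adapted

theorem commutator_of_polynomial_maps_general {S : Type*} [AddCommSemigroup S]
    {G : Type*} [Group G] (f f' : S → G) (hf : IsPoly f) (hf' : IsPoly f')
    (hnil : Group.IsNilpotent ↥(Subgroup.closure (Set.range f ∪ Set.range f'))) :
    IsPoly (fun t => f t * f' t * (f t)⁻¹ * (f' t)⁻¹) := by
  obtain ⟨d₁, hd₁⟩ := hf
  obtain ⟨d₂, hd₂⟩ := hf'
  set H := Subgroup.closure (Set.range f ∪ Set.range f')
  obtain ⟨n, hn⟩ := Subgroup.nilpotent_iff_lowerCentralSeries.mp hnil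
  set e := max d₁ d₂
  let F : ℕ → Subgroup H := fun k => (⊤ : Subgroup H).lowerCentralSeries (k / (e + 1))
  have hF : IsFiltration F := isFiltration_lowerCentralSeries_div _
  have htop : F (e + 0) = ⊤ := by simp [F, Nat.div_eq_of_lt (Nat.lt_succ_self e)]
  have hbot : F (n * (e + 1) + 0) = ⊥ := by simpa [F] using hn
  let g : S → H := fun t => ⟨f t, Subgroup.subset_closure (Or.inl ⟨t, rfl⟩)⟩
  let g' : S → H := fun t => ⟨f' t, Subgroup.subset_closure (Or.inr ⟨t, rfl⟩)⟩
  have hg : g ∈ adapted F (n * (e + 1)) 0 := mem_adapted_of_degLE hF.antitone htop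
    ((degLE_comp_iff H.subtype_injective).1 (hd₁.mono (le_max_left d₁ d₂)))
  have hg' : g' ∈ adapted F (n * (e + 1)) 0 := mem_adapted_of_degLE hF.antitone htop
    ((degLE_comp_iff H.subtype_injective).1 (hd₂.mono (le_max_right d₁ d₂)))
  exact ⟨n * (e + 1), (degLE_comp_iff H.subtype_injective).2
    (degLE_of_mem_adapted hbot ((adaptedClosed hF _).commutator_mem hg hg'))⟩

/-- If `f, f' : S → G` are polynomial maps from a nonempty additive commutative semigroup
`S` to a group `G`, and the subgroup of `G` generated by `f(S) ∪ f'(S)` is nilpotent,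
then the elementwise commutator `t ↦ f t * f' t * (f t)⁻¹ * (f' t)⁻¹` is a polynomial map. -/
theorem commutator_of_polynomial_maps {S : Type*} [AddCommSemigroup S] [Nonempty S]
    {G : Type*} [Group G] (f f' : S → G) (hf : IsPoly f) (hf' : IsPoly f')
    (hnil : Group.IsNilpotent ↥(Subgroup.closure (Set.range f ∪ Set.range f'))) :
    IsPoly (fun t => f t * f' t * (f t)⁻¹ * (f' t)⁻¹) :=
  commutator_of_polynomial_maps_general f f' hf hf' hnil

end PaperPoly
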